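/- For all u ∈ [0,1], φ(u) ≥ 1 + (u-1)/ln 2, with equality if and only if u = 1, where φ(u) = H((1 - √(1-u²))/2). -/

import Mathlib

open Real

noncomputable def binEnt (q : ℝ) : ℝ := -(q * Real.logb 2 q) - (1 - q) * Real.logb 2 (1 - q)

noncomputable def Bh (q : ℝ) : ℝ := 2 * Real.sqrt (q * (1 - q))

noncomputable def phi (u : ℝ) : ℝ := binEnt ((1 - Real.sqrt (1 - u ^ 2)) / 2)

open Set

/-! With `q = (1 - √(1 - u²)) / 2` one has `Bh q = u` and `phi u = binEntropy q / log 2`, so the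
claim becomes `log 2 - 1 ≤ binEntropy q - Bh q`, with equality only at `q = 1/2`. On `[0, 1/2]`
the difference `binEntropy q - Bh q` is strictly decreasing: its derivative
`log (1 - q) - log q - (1 - 2q) / √(q (1 - q))` is negative because the logarithmic mean of `q`
and `1 - q` exceeds their geometric mean, which after the substitution `t = √((1 - q) / q)` is
`log t < sinh (log t)`. -/

lemma Real.log_sub_log_lt_div_sqrt_mul {a b : ℝ} (ha : 0 < a) (hab : a < b) :
    log b - log a < (b - a) / √(a * b) := by
  have hb : 0 < b := ha.trans hab
  set t := √(b / a) with ht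
  have ht0 : 0 < t := sqrt_pos.2 (div_pos hb ha)
  have ht1 : 1 < t := by
    rw [ht, lt_sqrt zero_le_one, one_pow, one_lt_div ha]; exact hab
  have hlog : log b - log a = 2 * log t := by
    rw [ht, log_sqrt (div_pos hb ha).le, log_div hb.ne' ha.ne']; ring
  have hsinh : (b - a) / √(a * b) = 2 * sinh (log t) := by
    rw [sinh_log ht0, ht, sqrt_div' _ ha.le, sqrt_mul ha.le]
    have hsa := sqrt_pos.2 ha
    have hsb := sqrt_pos.2 hb
    field_simp
    rw [sq_sqrt ha.le, sq_sqrt hb.le]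
  rw [hlog, hsinh]
  have := self_lt_sinh_iff.2 (log_pos ht1)
  linarith

lemma hasDerivAt_Bh {q : ℝ} (hq0 : 0 < q) (hq1 : q < 1) :
    HasDerivAt Bh ((1 - 2 * q) / √(q * (1 - q))) q := by
  have hpos : 0 < q * (1 - q) := mul_pos hq0 (by linarith)
  have hprod : HasDerivAt (fun y ↦ y * (1 - y)) (1 - 2 * q) q :=
    ((hasDerivAt_id' q).mul ((hasDerivAt_id' q).const_sub 1)).congr_deriv (by ring)
  exact ((hprod.sqrt hpos.ne').const_mul 2).congr_deriv (by field_simp)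

lemma continuous_Bh : Continuous Bh := by
  unfold Bh; fun_prop

lemma Bh_one_sub (q : ℝ) : Bh (1 - q) = Bh q := by
  simp only [Bh]; ring_nf

lemma Bh_two_inv : Bh 2⁻¹ = 1 := by
  norm_num [Bh, show (1 / 4 : ℝ) = (1 / 2) ^ 2 by norm_num]

lemma binEntropy_sub_Bh_strictAntiOn :
    StrictAntiOn (fun q ↦ binEntropy q - Bh q) (Icc 0 2⁻¹) := by
  refine strictAntiOn_of_deriv_neg (convex_Icc 0 2⁻¹)
    (binEntropy_continuous.sub continuous_Bh).continuousOn fun q hq ↦ ?_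
  rw [interior_Icc] at hq
  obtain ⟨hq0, hq1⟩ := hq
  have hderiv : HasDerivAt (fun q ↦ binEntropy q - Bh q) _ q :=
    (hasDerivAt_binEntropy hq0.ne' (by linarith)).sub (hasDerivAt_Bh hq0 (by linarith))
  rw [hderiv.deriv]
  have := log_sub_log_lt_div_sqrt_mul hq0 (show q < 1 - q by linarith)
  rw [show 1 - q - q = 1 - 2 * q by ring] at this
  linarith

lemma log_two_sub_one_lt_binEntropy_sub_Bh {q : ℝ} (hq : q ∈ Icc 0 1) (hq2 : q ≠ 2⁻¹) :
    log 2 - 1 < binEntropy q - Bh q := by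
  wlog hlt : q < 2⁻¹ generalizing q
  · rw [← binEntropy_one_sub, ← Bh_one_sub]
    exact this ⟨by linarith [hq.2], by linarith [hq.1]⟩ (by contrapose! hq2; linarith)
      (by linarith [lt_of_le_of_ne (not_lt.1 hlt) (Ne.symm hq2)])
  have := binEntropy_sub_Bh_strictAntiOn ⟨hq.1, hlt.le⟩ ⟨by norm_num, le_rfl⟩ hlt
  simpa [Bh_two_inv] using this

lemma binEnt_eq_binEntropy_div_log_two (q : ℝ) : binEnt q = binEntropy q / log 2 := by
  simp only [binEnt, binEntropy, logb, log_inv]; ring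

lemma Bh_half_one_sub_sqrt {u : ℝ} (hu : 0 ≤ u) (hu1 : u ≤ 1) :
    Bh ((1 - √(1 - u ^ 2)) / 2) = u := by
  have hsq := sq_sqrt (show 0 ≤ 1 - u ^ 2 by nlinarith)
  rw [Bh, show (1 - √(1 - u ^ 2)) / 2 * (1 - (1 - √(1 - u ^ 2)) / 2) = (u / 2) ^ 2 by
    linear_combination -hsq / 4, sqrt_sq (by linarith)]
  ring

theorem phi_ge_tangent (u : ℝ) (hu : u ∈ Set.Icc (0:ℝ) 1) :
    1 + (u - 1) / Real.log 2 ≤ phi u ∧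
    (phi u = 1 + (u - 1) / Real.log 2 ↔ u = 1) := by
  obtain ⟨hu0, hu1⟩ := hu
  set q := (1 - √(1 - u ^ 2)) / 2 with hq
  have hs0 : 0 ≤ √(1 - u ^ 2) := sqrt_nonneg _
  have hs1 : √(1 - u ^ 2) ≤ 1 := sqrt_le_one.2 (by nlinarith)
  have hq_mem : q ∈ Icc 0 1 := ⟨by linarith, by linarith⟩
  have hq_half : q = 2⁻¹ ↔ u = 1 := by
    constructor
    · intro h
      have hs : √(1 - u ^ 2) = 0 := by linarith
      rw [sqrt_eq_zero'] at hs
      nlinarith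
    · rintro rfl; norm_num [hq]
  have hlog2 : 0 < log 2 := log_pos one_lt_two
  have hdiff : phi u - (1 + (u - 1) / log 2) = (binEntropy q - Bh q - (log 2 - 1)) / log 2 := by
    rw [phi, binEnt_eq_binEntropy_div_log_two, Bh_half_one_sub_sqrt hu0 hu1]
    field_simp; ring
  rcases eq_or_ne u 1 with rfl | hne
  · rw [hq_half.2 rfl, binEntropy_two_inv, Bh_two_inv, sub_self, sub_self, zero_div,
      sub_eq_zero] at hdiff
    simp [hdiff]
  · have hgap := log_two_sub_one_lt_binEntropy_sub_Bh hq_mem (mt hq_half.1 hne)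
    have hpos : 0 < phi u - (1 + (u - 1) / log 2) := hdiff ▸ div_pos (by linarith) hlog2
    exact ⟨by linarith, iff_of_false (by intro h; linarith) hne⟩
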